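/- Let k, ℓ, m, n be nonnegative integers with k + ℓ = m + n. Then the limit as ε → 0⁺ of the integral over [ε, 2π−ε] of (1 − e^{ikz})(1 − e^{iℓz})(1 − e^{−imz})(1 − e^{−inz})/(1 − cos z) dz equals 2π(k + ℓ + m + n − |k−m| − |k−n| − |ℓ−m| − |ℓ−n|). -/

import Mathlib

open Complex Finset Filter Topology intervalIntegral
open Real hiding exp cos

/-!
Put `x = e^{iz}` and `D_p = 1 + x + ⋯ + x^{p-1}`. Then `1 - cos z = (1 - x)(1 - x̄)/2` and
`(1 - x^k)(1 - x^l) = (1 - x)(D_k + D_l - D_{k+l})`, so for `0 < z < 2π` the integrand equals the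
trigonometric polynomial `2 (D_k + D_l - D_{k+l})(x) · (D_m + D_n - D_{m+n})(x̄)`. Being continuous,
its integrals over `[ε, 2π - ε]` tend to its integral over `[0, 2π]`, which orthogonality of the
`x^a` evaluates through `∫ D_p(x) D_q(x̄) = 2π min(p, q)`. With `k + l = m + n` the nine resulting
minima combine, via `2 min(p, q) = p + q - |p - q|`, to the stated value.
-/

theorem tendsto_integral_add_sub {E : Type*} [NormedAddCommGroup E] [NormedSpace ℝ E]
    [CompleteSpace E] {f : ℝ → E} (hf : ∀ a b, IntervalIntegrable f MeasureTheory.volume a b)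
    (a b : ℝ) : Tendsto (fun ε => ∫ x in a + ε..b - ε, f x) (𝓝 0) (𝓝 (∫ x in a..b, f x)) := by
  have hF := continuous_primitive hf a
  have hlim := ((hF.comp (continuous_sub_left b)).tendsto' 0 _ rfl).sub
    ((hF.comp (continuous_const_add a)).tendsto' 0 _ rfl)
  simp only [Function.comp_apply, sub_zero, add_zero, integral_same] at hlim
  exact hlim.congr fun ε => integral_interval_sub_left (hf _ _) (hf _ _)

theorem integral_exp_int_mul_I (c : ℤ) :
    ∫ z in (0 : ℝ)..2 * π, cexp (I * c * z) = if c = 0 then (2 * π : ℂ) else 0 := by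
  split_ifs with hc
  · simp [hc]
  · have hc' : I * c ≠ 0 := mul_ne_zero I_ne_zero (Int.cast_ne_zero.mpr hc)
    have : cexp (I * c * ↑(2 * π)) = 1 := by
      rw [← exp_int_mul_two_pi_mul_I c]; push_cast; ring_nf
    rw [integral_exp_mul_complex hc', this]
    simp

noncomputable def expSum (p : ℕ) (z : ℝ) : ℂ := ∑ a ∈ range p, cexp (I * a * z)

@[fun_prop]
theorem continuous_expSum (p : ℕ) : Continuous (expSum p) := by
  unfold expSum; fun_prop

theorem integral_expSum_mul_expSum_neg (p q : ℕ) :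
    ∫ z in (0 : ℝ)..2 * π, expSum p z * expSum q (-z) = 2 * π * (min p q : ℕ) := by
  have hterm (a b : ℕ) : ∫ z in (0 : ℝ)..2 * π, cexp (I * a * z) * cexp (I * b * ↑(-z))
      = if a = b then (2 * π : ℂ) else 0 := by
    have (z : ℝ) :
        cexp (I * a * z) * cexp (I * b * ↑(-z)) = cexp (I * ((a - b : ℤ) : ℂ) * z) := by
      rw [← Complex.exp_add]; push_cast; ring_nf
    simp only [this, integral_exp_int_mul_I, sub_eq_zero, Nat.cast_inj]
  simp only [expSum, sum_mul_sum, ← sum_product']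
  rw [integral_finsetSum fun _ _ => (by fun_prop : Continuous _).intervalIntegrable _ _]
  simp only [hterm]
  rw [sum_product]
  simp only [sum_ite_eq]
  rw [sum_ite_mem, range_inter_range, sum_const, card_range, nsmul_eq_mul, mul_comm]

theorem one_sub_exp_eq_mul_expSum (p : ℕ) (z : ℝ) :
    1 - cexp (I * p * z) = (1 - cexp (I * z)) * expSum p z := by
  have hpow (a : ℕ) : cexp (I * a * z) = cexp (I * z) ^ a := by
    rw [← Complex.exp_nat_mul]; ring_nf
  simp only [expSum, hpow, mul_neg_geom_sum]

noncomputable def expSumPair (k l : ℕ) (z : ℝ) : ℂ := expSum k z + expSum l z - expSum (k + l) z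

@[fun_prop]
theorem continuous_expSumPair (k l : ℕ) : Continuous (expSumPair k l) := by
  unfold expSumPair; fun_prop

theorem one_sub_exp_mul_one_sub_exp (k l : ℕ) (z : ℝ) :
    (1 - cexp (I * k * z)) * (1 - cexp (I * l * z)) = (1 - cexp (I * z)) * expSumPair k l z := by
  have hadd : cexp (I * ↑(k + l) * z) = cexp (I * k * z) * cexp (I * l * z) := by
    rw [← Complex.exp_add]; push_cast; ring_nf
  rw [expSumPair, mul_sub (1 - cexp (I * z)), mul_add (1 - cexp (I * z)),
    ← one_sub_exp_eq_mul_expSum, ← one_sub_exp_eq_mul_expSum, ← one_sub_exp_eq_mul_expSum, hadd]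
  ring

theorem one_sub_cos_eq (z : ℝ) :
    ((1 - Real.cos z : ℝ) : ℂ) = (1 - cexp (I * z)) * (1 - cexp (I * ↑(-z))) / 2 := by
  have hinv : cexp (I * ↑(-z)) = (cexp (I * z))⁻¹ := by rw [← Complex.exp_neg]; push_cast; ring_nf
  rw [hinv]
  push_cast
  rw [Complex.cos, show (z : ℂ) * I = I * z by ring, show -(z : ℂ) * I = -(I * z) by ring,
    Complex.exp_neg]
  field_simp
  ring

theorem quartic_integrand_eq (k l m n : ℕ) {z : ℝ} (hz : Real.cos z ≠ 1) :
    (1 - cexp (I * k * z)) * (1 - cexp (I * l * z)) * (1 - cexp (-I * m * z))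
        * (1 - cexp (-I * n * z)) / ((1 - Real.cos z : ℝ) : ℂ)
      = 2 * (expSumPair k l z * expSumPair m n (-z)) := by
  have hneg (p : ℕ) : cexp (-I * p * z) = cexp (I * p * ↑(-z)) := by push_cast; ring_nf
  have hden : ((1 - Real.cos z : ℝ) : ℂ) ≠ 0 := by
    exact_mod_cast sub_ne_zero.mpr hz.symm
  rw [hneg, hneg, mul_assoc _ (1 - _), one_sub_exp_mul_one_sub_exp,
    one_sub_exp_mul_one_sub_exp, div_eq_iff hden]
  rw [one_sub_cos_eq] at hden ⊢
  ring

theorem integral_expSumPair_mul_expSumPair_neg {k l m n : ℕ} (h : k + l = m + n) :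
    ∫ z in (0 : ℝ)..2 * π, expSumPair k l z * expSumPair m n (-z)
      = π * ((k + l + m + n - |(k : ℤ) - m| - |(k : ℤ) - n| - |(l : ℤ) - m| - |(l : ℤ) - n| : ℤ)
        : ℂ) := by
  simp only [expSumPair, add_mul, mul_add, sub_mul, mul_sub]
  simp (disch := exact (by fun_prop : Continuous _).intervalIntegrable _ _)
    only [integral_add, integral_sub, integral_expSum_mul_expSum_neg]
  rw [show (k + l + m + n - |(k : ℤ) - m| - |(k : ℤ) - n| - |(l : ℤ) - m| - |(l : ℤ) - n| : ℤ)
      = 2 * (((min k m : ℕ) : ℤ) + (min k n : ℕ) - (min k (m + n) : ℕ) + (min l m : ℕ)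
        + (min l n : ℕ) - (min l (m + n) : ℕ) - (min (k + l) m : ℕ) - (min (k + l) n : ℕ)
        + (min (k + l) (m + n) : ℕ)) by simp only [Int.abs_eq_natAbs]; omega]
  push_cast [-Nat.cast_min]
  ring

theorem cos_ne_one_of_mem_Ioo {z : ℝ} (hz : z ∈ Set.Ioo 0 (2 * π)) : Real.cos z ≠ 1 := fun h =>
  hz.1.ne' ((Real.cos_eq_one_iff_of_lt_of_lt (by linarith [hz.1, pi_pos]) hz.2).mp h)

/-- The quartic interaction integral for the energy:
`lim_{ε→0⁺} ∫_ε^{2π-ε} (1-e^{ikz})(1-e^{iℓz})(1-e^{-imz})(1-e^{-inz})/(1-cos z) dz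
  = 2π(k+ℓ+m+n - |k-m| - |k-n| - |ℓ-m| - |ℓ-n|)` when `k + ℓ = m + n`. -/
theorem stmt_4 (k l m n : ℕ) (h : k + l = m + n) :
    Filter.Tendsto
      (fun ε : ℝ => ∫ z in ε..(2 * Real.pi - ε),
        ((1 : ℂ) - Complex.exp (Complex.I * (k : ℂ) * (z : ℂ)))
          * ((1 : ℂ) - Complex.exp (Complex.I * (l : ℂ) * (z : ℂ)))
          * ((1 : ℂ) - Complex.exp (-Complex.I * (m : ℂ) * (z : ℂ)))
          * ((1 : ℂ) - Complex.exp (-Complex.I * (n : ℂ) * (z : ℂ)))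
          / (((1 - Real.cos z : ℝ) : ℂ)))
      (nhdsWithin 0 (Set.Ioi 0))
      (nhds ((2 * Real.pi *
        (((k : ℤ) + l + m + n - |(k : ℤ) - m| - |(k : ℤ) - n| - |(l : ℤ) - m| - |(l : ℤ) - n| : ℤ) : ℝ) : ℝ) : ℂ)) := by
  have hcont : Continuous fun z => 2 * (expSumPair k l z * expSumPair m n (-z)) := by fun_prop
  have hlim := tendsto_integral_add_sub hcont.intervalIntegrable 0 (2 * π)
  simp only [zero_add] at hlim
  rw [integral_const_mul, integral_expSumPair_mul_expSumPair_neg h] at hlim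
  convert (hlim.mono_left nhdsWithin_le_nhds).congr' ?_ using 2
  · rw [Complex.ofReal_mul, Complex.ofReal_intCast, Complex.ofReal_mul, Complex.ofReal_ofNat]
    ring
  filter_upwards [Ioo_mem_nhdsGT pi_pos] with ε hε
  refine integral_congr fun z hz => (quartic_integrand_eq k l m n (cos_ne_one_of_mem_Ioo ?_)).symm
  rw [Set.uIcc_of_le (by linarith [hε.2])] at hz
  exact ⟨hε.1.trans_le hz.1, by linarith [hz.2, hε.1]⟩
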